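/- arXiv:2003.09107 — 7 statements merged into one kernel-verified Lean document; each statement's English description precedes it below -/
import Mathlib

section
/- Let L be a finite-dimensional Lie algebra over ℂ, g a Lie algebra automorphism of L, and λ, μ ∈ ℂ. If x belongs to the generalized eigenspace of g with eigenvalue λ and y belongs to the generalized eigenspace of g with eigenvalue μ, then the bracket ⁅x, y⁆ belongs to the generalized eigenspace of g with eigenvalue λ·μ. -/
/-!
Since `g ⁅x, y⁆ = ⁅g x, g y⁆`, one has
`(g - λμ) ⁅x, y⁆ = ⁅(g - λ) x, g y⁆ + λ ⁅x, (g - μ) y⁆`,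
and both terms on the right are "smaller" than `⁅x, y⁆`: in the first, `x` has moved one step down
the nilpotent filtration of `g - λ` (and `g y` stays in the generalized `μ`-eigenspace); in the
second, `y` has moved one step down that of `g - μ`. A double induction on these nilpotency
orders concludes.
-/

namespace Module.End

variable {R M : Type*} [CommRing R] [AddCommGroup M] [Module R M]

theorem mem_maxGenEigenspace_of_sub_smul_apply_mem {f : End R M} {c : R} {v : M}
    (h : (f - c • 1) v ∈ f.maxGenEigenspace c) : v ∈ f.maxGenEigenspace c := by
  obtain ⟨k, hk⟩ := (mem_maxGenEigenspace _ _ _).1 h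
  exact (mem_maxGenEigenspace _ _ _).2 ⟨k + 1, by rwa [pow_succ, mul_apply]⟩

variable {M₁ M₂ : Type*} [AddCommGroup M₁] [Module R M₁] [AddCommGroup M₂] [Module R M₂]

theorem sub_smul_apply_bilin_eq {B : M₁ →ₗ[R] M₂ →ₗ[R] M} {f₁ : End R M₁} {f₂ : End R M₂}
    {f : End R M} (hB : ∀ m n, f (B m n) = B (f₁ m) (f₂ n)) (a b : R) (m : M₁) (n : M₂) :
    (f - (a * b) • 1) (B m n) = B ((f₁ - a • 1) m) (f₂ n) + a • B m ((f₂ - b • 1) n) := by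
  simp only [one_apply, hB, map_sub, map_smul, LinearMap.sub_apply,
    LinearMap.smul_apply, smul_sub, smul_smul]
  abel

theorem bilin_mem_maxGenEigenspace_mul {B : M₁ →ₗ[R] M₂ →ₗ[R] M} {f₁ : End R M₁}
    {f₂ : End R M₂} {f : End R M} (hB : ∀ m n, f (B m n) = B (f₁ m) (f₂ n)) {a b : R}
    {m : M₁} {n : M₂} (hm : m ∈ f₁.maxGenEigenspace a) (hn : n ∈ f₂.maxGenEigenspace b) :
    B m n ∈ f.maxGenEigenspace (a * b) := by
  obtain ⟨k, hk⟩ := (mem_maxGenEigenspace _ _ _).1 hm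
  clear hm
  induction k generalizing m n with
  | zero => simp_all
  | succ k ihk =>
    obtain ⟨l, hl⟩ := (mem_maxGenEigenspace _ _ _).1 hn
    clear hn
    induction l generalizing n with
    | zero => simp_all
    | succ l ihl =>
      have hn : n ∈ f₂.maxGenEigenspace b := (mem_maxGenEigenspace _ _ _).2 ⟨l + 1, hl⟩
      have hf₂n : f₂ n ∈ f₂.maxGenEigenspace b := mapsTo_maxGenEigenspace_of_comm rfl b hn
      apply mem_maxGenEigenspace_of_sub_smul_apply_mem
      rw [sub_smul_apply_bilin_eq hB]
      refine add_mem (ihk hf₂n ?_) (Submodule.smul_mem _ a (ihl ?_))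
      · rwa [← mul_apply, ← pow_succ]
      · rwa [← mul_apply, ← pow_succ]

end Module.End

theorem bracket_mem_maxGenEigenspace_mul_general
    (L : Type*) [LieRing L] [LieAlgebra ℂ L]
    (g : L ≃ₗ⁅ℂ⁆ L) (lam mu : ℂ) (x y : L)
    (hx : x ∈ Module.End.maxGenEigenspace g.toLinearEquiv.toLinearMap lam)
    (hy : y ∈ Module.End.maxGenEigenspace g.toLinearEquiv.toLinearMap mu) :
    ⁅x, y⁆ ∈ Module.End.maxGenEigenspace g.toLinearEquiv.toLinearMap (lam * mu) :=
  Module.End.bilin_mem_maxGenEigenspace_mul (B := (LieAlgebra.ad ℂ L : L →ₗ[ℂ] Module.End ℂ L))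
    (fun m n => g.map_lie m n) hx hy

/-- If `x` and `y` lie in the generalized eigenspaces of a Lie algebra automorphism `g` of a
finite-dimensional complex Lie algebra `L`, with eigenvalues `λ` and `μ` respectively, then
`⁅x, y⁆` lies in the generalized eigenspace of `g` with eigenvalue `λ * μ`. -/
theorem bracket_mem_maxGenEigenspace_mul
    (L : Type*) [LieRing L] [LieAlgebra ℂ L] [FiniteDimensional ℂ L]
    (g : L ≃ₗ⁅ℂ⁆ L) (lam mu : ℂ) (x y : L)
    (hx : x ∈ Module.End.maxGenEigenspace g.toLinearEquiv.toLinearMap lam)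
    (hy : y ∈ Module.End.maxGenEigenspace g.toLinearEquiv.toLinearMap mu) :
    ⁅x, y⁆ ∈ Module.End.maxGenEigenspace g.toLinearEquiv.toLinearMap (lam * mu) :=
  bracket_mem_maxGenEigenspace_mul_general L g lam mu x y hx hy
end

section
/- Let L be a finite-dimensional Lie algebra over ℂ, g a Lie algebra automorphism of L, and s : L → L a ℂ-linear map such that s x = λ • x for every λ ∈ ℂ and every x in the generalized eigenspace of g with eigenvalue λ. Then s preserves the Lie bracket: s ⁅x, y⁆ = ⁅s x, s y⁆ for all x, y ∈ L. -/
/-!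
A bracket-preserving `g` satisfies `(g - μν)⁅a, b⁆ = ⁅(g - μ)a, g b⁆ + μ⁅a, (g - ν)b⁆`, so by
induction the bracket of generalized `μ`- and `ν`-eigenvectors of `g` is a generalized
`μν`-eigenvector. Hence on such pairs both `s ⁅a, b⁆` and `⁅s a, s b⁆` equal `μν • ⁅a, b⁆`, and
since the generalized eigenspaces span `L` the two bilinear maps agree everywhere.
-/

open Module

theorem LinearMap.ext₂_of_iSup_eq_top {R M N P ι κ : Type*} [CommSemiring R]
    [AddCommMonoid M] [AddCommMonoid N] [AddCommMonoid P] [Module R M] [Module R N] [Module R P]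
    {p : ι → Submodule R M} {q : κ → Submodule R N} (hp : ⨆ i, p i = ⊤) (hq : ⨆ j, q j = ⊤)
    {B₁ B₂ : M →ₗ[R] N →ₗ[R] P} (h : ∀ i j, ∀ x ∈ p i, ∀ y ∈ q j, B₁ x y = B₂ x y) :
    B₁ = B₂ := by
  refine LinearMap.ext_on (s := ⋃ i, (p i : Set M)) (by rw [← Submodule.iSup_eq_span, hp])
    fun x hx ↦ LinearMap.ext_on (s := ⋃ j, (q j : Set N)) (by rw [← Submodule.iSup_eq_span, hq])
      fun y hy ↦ ?_
  obtain ⟨i, hx⟩ := Set.mem_iUnion.mp hx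
  obtain ⟨j, hy⟩ := Set.mem_iUnion.mp hy
  exact h i j x hx y hy

namespace Module.End

variable {R L : Type*} [CommRing R] [LieRing L] [LieAlgebra R L] {f : End R L}

theorem sub_mul_smul_one_apply_lie (hf : ∀ a b : L, f ⁅a, b⁆ = ⁅f a, f b⁆) (μ ν : R) (a b : L) :
    (f - (μ * ν) • 1) ⁅a, b⁆ = ⁅(f - μ • 1) a, f b⁆ + μ • ⁅a, (f - ν • 1) b⁆ := by
  simp only [LinearMap.sub_apply, LinearMap.smul_apply, one_apply, hf, sub_lie, lie_sub,
    smul_lie, lie_smul, smul_sub, smul_smul]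
  abel

theorem pow_sub_mul_smul_one_apply_lie_eq_zero (hf : ∀ a b : L, f ⁅a, b⁆ = ⁅f a, f b⁆)
    {μ ν : R} {k m : ℕ} {a b : L} (ha : ((f - μ • 1) ^ k) a = 0) (hb : ((f - ν • 1) ^ m) b = 0) :
    ((f - (μ * ν) • 1) ^ (k + m)) ⁅a, b⁆ = 0 := by
  induction k generalizing m a b with
  | zero => simp_all
  | succ k ihk =>
    induction m generalizing b with
    | zero => simp_all
    | succ m ihm =>
      have ha' : ((f - μ • 1) ^ k) ((f - μ • 1) a) = 0 := by rwa [← mul_apply, ← pow_succ]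
      have hb' : ((f - ν • 1) ^ m) ((f - ν • 1) b) = 0 := by rwa [← mul_apply, ← pow_succ]
      have hfb : ((f - ν • 1) ^ (m + 1)) (f b) = 0 := by
        have hcomm : Commute f (f - ν • 1) :=
          (Commute.refl f).sub_right ((Commute.one_right f).smul_right ν)
        rw [← mul_apply, ← (hcomm.pow_right _).eq, mul_apply, hb, map_zero]
      calc ((f - (μ * ν) • 1) ^ (k + 1 + (m + 1))) ⁅a, b⁆
          = ((f - (μ * ν) • 1) ^ (k + (m + 1))) ⁅(f - μ • 1) a, f b⁆ +
              μ • ((f - (μ * ν) • 1) ^ (k + 1 + m)) ⁅a, (f - ν • 1) b⁆ := by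
            rw [show k + 1 + (m + 1) = k + 1 + m + 1 by omega, pow_succ, mul_apply,
              sub_mul_smul_one_apply_lie hf, map_add, map_smul,
              show k + (m + 1) = k + 1 + m by omega]
        _ = 0 := by rw [ihk ha' hfb, ihm hb', smul_zero, add_zero]

theorem lie_mem_maxGenEigenspace_mul (hf : ∀ a b : L, f ⁅a, b⁆ = ⁅f a, f b⁆) {μ ν : R} {a b : L}
    (ha : a ∈ f.maxGenEigenspace μ) (hb : b ∈ f.maxGenEigenspace ν) :
    ⁅a, b⁆ ∈ f.maxGenEigenspace (μ * ν) := by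
  rw [mem_maxGenEigenspace] at ha hb ⊢
  obtain ⟨k, ha⟩ := ha
  obtain ⟨m, hb⟩ := hb
  exact ⟨k + m, pow_sub_mul_smul_one_apply_lie_eq_zero hf ha hb⟩

end Module.End

/-- If `s` is a linear map acting as the scalar `λ` on each generalized eigenspace of a Lie
algebra automorphism `g` of a finite-dimensional complex Lie algebra (the semisimple part of
`g`), then `s` preserves the Lie bracket. -/
theorem semisimplePart_preserves_bracket
    (L : Type*) [LieRing L] [LieAlgebra ℂ L] [FiniteDimensional ℂ L]
    (g : L ≃ₗ⁅ℂ⁆ L) (s : L →ₗ[ℂ] L)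
    (hs : ∀ (lam : ℂ) (x : L),
      x ∈ Module.End.maxGenEigenspace g.toLinearEquiv.toLinearMap lam → s x = lam • x)
    (x y : L) : s ⁅x, y⁆ = ⁅s x, s y⁆ := by
  have hG := End.iSup_maxGenEigenspace_eq_top g.toLinearEquiv.toLinearMap
  have hbracket : (LieModule.toEnd ℂ L L : L →ₗ[ℂ] End ℂ L).compr₂ s =
      (LieModule.toEnd ℂ L L : L →ₗ[ℂ] End ℂ L).compl₁₂ s s := by
    refine LinearMap.ext₂_of_iSup_eq_top hG hG fun μ ν a ha b hb ↦ ?_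
    have hab := End.lie_mem_maxGenEigenspace_mul (f := g.toLinearEquiv.toLinearMap) g.map_lie ha hb
    change s ⁅a, b⁆ = ⁅s a, s b⁆
    rw [hs _ _ hab, hs _ _ ha, hs _ _ hb, smul_lie, lie_smul, smul_smul]
  simpa using congr($hbracket x y)
end

section
/- Let L be a finite-dimensional Lie algebra over ℂ, g a Lie algebra automorphism of L, and s : L ≃ L a ℂ-linear equivalence such that s x = λ • x for every λ ∈ ℂ and every x in the generalized eigenspace of g with eigenvalue λ. Then the composite u = s⁻¹ ∘ g (the unipotent part of g) preserves the Lie bracket: u ⁅x, y⁆ = ⁅u x, u y⁆ for all x, y ∈ L. -/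
/-! Because `g` respects brackets, a bracket of generalized eigenvectors of `g` for `λ` and `μ` is
a generalized eigenvector for `λμ`. So `s`, which is the scalar `λ` on the generalized
`λ`-eigenspace, respects brackets on a family of subspaces spanning `L`, hence everywhere; then
`s⁻¹` and `s⁻¹ ∘ g` respect brackets as well. -/

open Module End

section
variable {R L : Type*} [CommRing R] [LieRing L] [LieAlgebra R L]

theorem LieHom.sub_mul_smul_apply_lie (f : L →ₗ⁅R⁆ L) (c d : R) (a b : L) :
    ((f : End R L) - (c * d) • 1) ⁅a, b⁆ =
      ⁅((f : End R L) - c • 1) a, f b⁆ + c • ⁅a, ((f : End R L) - d • 1) b⁆ := by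
  simp only [LinearMap.sub_apply, LinearMap.smul_apply, Module.End.one_apply,
    LieHom.coe_toLinearMap, LieHom.map_lie, sub_lie, lie_sub, smul_lie, lie_smul, smul_smul,
    smul_sub]
  abel

theorem LieHom.pow_sub_mul_smul_apply_lie_eq_zero (f : L →ₗ⁅R⁆ L) {c d : R} {k l : ℕ} {a b : L}
    (ha : (((f : End R L) - c • 1) ^ k) a = 0) (hb : (((f : End R L) - d • 1) ^ l) b = 0) :
    (((f : End R L) - (c * d) • 1) ^ (k + l)) ⁅a, b⁆ = 0 := by
  induction k generalizing a l b with
  | zero => simp_all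
  | succ k ihk =>
    induction l generalizing b with
    | zero => simp_all
    | succ l ihl =>
      have hfb : (((f : End R L) - d • 1) ^ (l + 1)) (f b) = 0 := by
        have : Commute (((f : End R L) - d • 1) ^ (l + 1)) f :=
          ((Commute.refl _).sub_left ((Commute.one_left _).smul_left d)).pow_left _
        rw [← LieHom.coe_toLinearMap, ← mul_apply, this.eq, mul_apply, hb, map_zero]
      rw [← add_assoc, pow_succ, mul_apply, sub_mul_smul_apply_lie, map_add, map_smul,
        ihl (by rwa [← mul_apply, ← pow_succ]), smul_zero, add_zero, add_right_comm, add_assoc,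
        ihk (by rwa [← mul_apply, ← pow_succ]) hfb]

theorem LieHom.lie_mem_maxGenEigenspace_mul (f : L →ₗ⁅R⁆ L) {c d : R} {a b : L}
    (ha : a ∈ maxGenEigenspace (f : End R L) c) (hb : b ∈ maxGenEigenspace (f : End R L) d) :
    ⁅a, b⁆ ∈ maxGenEigenspace (f : End R L) (c * d) := by
  rw [mem_maxGenEigenspace] at ha hb ⊢
  obtain ⟨k, hk⟩ := ha
  obtain ⟨l, hl⟩ := hb
  exact ⟨k + l, f.pow_sub_mul_smul_apply_lie_eq_zero hk hl⟩

end

theorem LieHom.map_lie_of_forall_maxGenEigenspace {K L : Type*} [Field K] [IsAlgClosed K]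
    [LieRing L] [LieAlgebra K L] [FiniteDimensional K L] (f : L →ₗ⁅K⁆ L) (s : L →ₗ[K] L)
    (hs : ∀ (c : K) (x : L), x ∈ maxGenEigenspace (f : End K L) c → s x = c • x) (a b : L) :
    s ⁅a, b⁆ = ⁅s a, s b⁆ := by
  have hspan (z : L) : z ∈ ⨆ c, maxGenEigenspace (f : End K L) c := by
    simp [iSup_maxGenEigenspace_eq_top]
  induction hspan a using Submodule.iSup_induction' with
  | zero => simp
  | add a a' _ _ ha ha' => rw [add_lie, map_add, ha, ha', map_add, add_lie]
  | mem c a hac =>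
    induction hspan b using Submodule.iSup_induction' with
    | zero => simp
    | add b b' _ _ hb hb' => rw [lie_add, map_add, hb, hb', map_add, lie_add]
    | mem d b hbd =>
      rw [hs c a hac, hs d b hbd, hs _ _ (f.lie_mem_maxGenEigenspace_mul hac hbd), smul_lie,
        lie_smul, smul_smul]

/-- If `s` is a linear equivalence acting as the scalar `λ` on each generalized eigenspace of a
Lie algebra automorphism `g` of a finite-dimensional complex Lie algebra (the semisimple part of
`g`), then the unipotent part `u = s⁻¹ ∘ g` of `g` preserves the Lie bracket. -/
theorem unipotentPart_preserves_bracket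
    (L : Type*) [LieRing L] [LieAlgebra ℂ L] [FiniteDimensional ℂ L]
    (g : L ≃ₗ⁅ℂ⁆ L) (s : L ≃ₗ[ℂ] L)
    (hs : ∀ (lam : ℂ) (x : L),
      x ∈ Module.End.maxGenEigenspace g.toLinearEquiv.toLinearMap lam → s x = lam • x)
    (x y : L) : s.symm (g ⁅x, y⁆) = ⁅s.symm (g x), s.symm (g y)⁆ := by
  let s' : L ≃ₗ⁅ℂ⁆ L :=
    { s with map_lie' := (g : L →ₗ⁅ℂ⁆ L).map_lie_of_forall_maxGenEigenspace s hs _ _ }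
  rw [g.map_lie]
  exact s'.symm.map_lie _ _
end

section
/- Let L be a Lie algebra over ℂ and N : L → L a nilpotent ℂ-linear map such that the exponential exp N = ∑_{k≥0} N^k / k! (a finite sum, since N is nilpotent) preserves the Lie bracket, i.e. (exp N) ⁅x, y⁆ = ⁅(exp N) x, (exp N) y⁆ for all x, y ∈ L. Then N is a derivation of L: N ⁅x, y⁆ = ⁅N x, y⁆ + ⁅x, N y⁆ for all x, y ∈ L. -/
/-!
Let `b : L ⊗ L → L` be the bracket and `Δ = 1 ⊗ N + N ⊗ 1`, so that `exp Δ = exp N ⊗ exp N` and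
the hypothesis reads `exp N ∘ b = b ∘ exp Δ`. On `Hom(L ⊗ L, L)` the operators `g ↦ N ∘ g` and
`g ↦ g ∘ Δ` commute and are nilpotent, so the exponential of their difference `T` is
`g ↦ exp N ∘ g ∘ exp (-Δ)`, which fixes `b`. As `exp T - 1 = T u` with `u` unipotent, `T b = 0`,
i.e. `N ∘ b = b ∘ Δ`, which is the Leibniz rule.
-/

open IsNilpotent TensorProduct

section Exp

variable {A : Type*} [Ring A] [Module ℚ A]

theorem IsNilpotent.map_exp_of_map_pow {B F : Type*} [Ring B] [Module ℚ B] [FunLike F A B]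
    [AddMonoidHomClass F A B] {a : A} (ha : IsNilpotent a) (φ : F)
    (hφ : ∀ i, φ (a ^ i) = φ a ^ i) : φ (exp a) = exp (φ a) := by
  obtain ⟨k, hk⟩ := ha
  have hk' : φ a ^ k = 0 := by rw [← hφ, hk, map_zero]
  simp [exp_eq_sum hk, exp_eq_sum hk', map_rat_smul, hφ]

theorem IsNilpotent.smul_eq_zero_of_exp_smul_eq {M : Type*} [AddCommGroup M] [Module A M] {a : A}
    (ha : IsNilpotent a) {m : M} (h : exp a • m = m) : a • m = 0 := by
  obtain ⟨k, hk⟩ := ha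
  set w := ∑ i ∈ Finset.range k, ((i + 2).factorial : ℚ)⁻¹ • a ^ i
  have hw : Commute a w :=
    Commute.sum_right _ _ _ fun i _ => ((Commute.refl a).pow_right i).smul_right _
  have hexp : exp a = 1 + a * (1 + a * w) := by
    rw [exp_eq_sum (pow_eq_zero_of_le (Nat.le_add_right k 2) hk), Finset.sum_range_succ',
      Finset.sum_range_succ']
    simp [w, mul_add, Finset.mul_sum, mul_smul_comm, _root_.pow_succ', add_comm, add_left_comm]
  have hunit : IsUnit (1 + a * w) := (hw.isNilpotent_mul_right ⟨k, hk⟩).isUnit_one_add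
  rw [hexp, add_smul, one_smul, add_eq_left,
    ((Commute.one_right a).add_right ((Commute.refl a).mul_right hw)).eq, mul_smul] at h
  exact hunit.smul_eq_zero.1 h

end Exp

section Composition

variable {R M N : Type*} [CommRing R] [AddCommGroup M] [Module R M] [AddCommGroup N] [Module R N]

theorem LinearMap.llcomp_pow (f : Module.End R N) (i : ℕ) :
    (llcomp R M N N (f ^ i) : Module.End R (M →ₗ[R] N)) = llcomp R M N N f ^ i := by
  induction i with
  | zero => rfl
  | succ i ih => rw [_root_.pow_succ', _root_.pow_succ', ← ih]; rfl

theorem LinearMap.llcomp_flip_pow (f : Module.End R M) (i : ℕ) :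
    ((llcomp R M M N).flip (f ^ i) : Module.End R (M →ₗ[R] N)) = (llcomp R M M N).flip f ^ i := by
  induction i with
  | zero => rfl
  | succ i ih => rw [_root_.pow_succ', _root_.pow_succ, ← ih]; rfl

theorem Module.End.comp_eq_of_exp_comp_eq [Module ℚ M] [Module ℚ N] {fM : Module.End R M}
    {fN : Module.End R N} {g : M →ₗ[R] N} (hfM : IsNilpotent fM) (hfN : IsNilpotent fN)
    (h : exp fN ∘ₗ g = g ∘ₗ exp fM) : fN ∘ₗ g = g ∘ₗ fM := by
  let postcomp : Module.End R N →ₗ[R] Module.End R (M →ₗ[R] N) := LinearMap.llcomp R M N N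
  let precomp : Module.End R M →ₗ[R] Module.End R (M →ₗ[R] N) := (LinearMap.llcomp R M M N).flip
  have hcomm : Commute (postcomp fN) (precomp fM) := by ext; rfl
  have hpost : IsNilpotent (postcomp fN) := by
    obtain ⟨k, hk⟩ := hfN
    exact ⟨k, by rw [← LinearMap.llcomp_pow, hk, map_zero]⟩
  have hpre : IsNilpotent (precomp fM) := by
    obtain ⟨k, hk⟩ := hfM
    exact ⟨k, by rw [← LinearMap.llcomp_flip_pow, hk, map_zero]⟩
  have hfix : exp (postcomp fN - precomp fM) g = g := by
    rw [sub_eq_add_neg, exp_add_of_commute hcomm.neg_right hpost hpre.neg, ← map_neg,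
      ← hfN.map_exp_of_map_pow postcomp (LinearMap.llcomp_pow fN),
      ← hfM.neg.map_exp_of_map_pow precomp (LinearMap.llcomp_flip_pow (-fM))]
    change exp fN ∘ₗ g ∘ₗ exp (-fM) = g
    rw [← LinearMap.comp_assoc, h, LinearMap.comp_assoc, ← Module.End.mul_eq_comp,
      exp_mul_exp_neg_self hfM]
    rfl
  have hker := (hcomm.isNilpotent_sub hpost hpre).smul_eq_zero_of_exp_smul_eq hfix
  rwa [Module.End.smul_def, LinearMap.sub_apply, sub_eq_zero] at hker

end Composition

theorem Module.End.apply_lie_eq_add_of_exp_apply_lie {R L : Type*} [CommRing R] [LieRing L]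
    [LieAlgebra R L] [Module ℚ L] {D : Module.End R L} (hD : IsNilpotent D)
    (h : ∀ x y : L, exp D ⁅x, y⁆ = ⁅exp D x, exp D y⁆) (x y : L) :
    D ⁅x, y⁆ = ⁅D x, y⁆ + ⁅x, D y⁆ := by
  let bracket : L ⊗[R] L →ₗ[R] L := LieModule.toModuleHom R L L
  let DL := D.lTensor L
  let DR := D.rTensor L
  have hcomm : Commute DL DR := by ext; simp [DL, DR]
  have hDL : IsNilpotent DL := hD.map (lTensorAlgHom R L L)
  have hDR : IsNilpotent DR := hD.map (rTensorAlgHom R L L)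
  have hexp : exp D ∘ₗ bracket = bracket ∘ₗ exp (DL + DR) := by
    have hexpL : exp DL = (exp D).lTensor L := (hD.map_exp (lTensorAlgHom R L L)).symm
    have hexpR : exp DR = (exp D).rTensor L := (hD.map_exp (rTensorAlgHom R L L)).symm
    rw [exp_add_of_commute hcomm hDL hDR, hexpL, hexpR]
    ext x y
    simp [bracket, h]
  have hder := LinearMap.congr_fun (comp_eq_of_exp_comp_eq (hcomm.isNilpotent_add hDL hDR) hD hexp)
    (x ⊗ₜ y)
  simpa [bracket, DL, DR, add_comm] using hder

open Finset in
/-- If `N` is a nilpotent linear endomorphism of a complex Lie algebra `L` whose exponential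
`exp N = ∑_{i < k} N^i / i!` (a finite sum, `N ^ k = 0`) preserves the Lie bracket, then `N` is
a derivation of `L`. -/
theorem nilpotent_exp_automorphism_is_derivation
    (L : Type*) [LieRing L] [LieAlgebra ℂ L] (N : Module.End ℂ L)
    (k : ℕ) (hk : N ^ k = 0)
    (hexp : ∀ x y : L,
      (∑ i ∈ Finset.range k, ((i.factorial : ℂ)⁻¹) • N ^ i) ⁅x, y⁆ =
        ⁅(∑ i ∈ Finset.range k, ((i.factorial : ℂ)⁻¹) • N ^ i) x,
          (∑ i ∈ Finset.range k, ((i.factorial : ℂ)⁻¹) • N ^ i) y⁆)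
    (x y : L) : N ⁅x, y⁆ = ⁅N x, y⁆ + ⁅x, N y⁆ := by
  -- `IsNilpotent.exp` has `ℚ`-coefficients; restrict scalars to see `L` as a `ℚ`-space.
  let _ : Module ℚ L := Module.compHom L (algebraMap ℚ ℂ)
  have hsum : ∑ i ∈ Finset.range k, ((i.factorial : ℂ)⁻¹) • N ^ i = exp N := by
    simp_rw [exp_eq_sum hk, ← Rat.cast_smul_eq_qsmul ℂ, Rat.cast_inv, Rat.cast_natCast]
  rw [hsum] at hexp
  exact Module.End.apply_lie_eq_add_of_exp_apply_lie ⟨k, hk⟩ hexp x y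
end

section
/- Let V be a finite-dimensional vector space over ℂ, B a symmetric bilinear form on V, and g : V ≃ V a linear automorphism preserving B, i.e. B(g x, g y) = B(x, y) for all x, y ∈ V. Let λ, μ ∈ ℂ with λ·μ ≠ 1. If x belongs to the generalized eigenspace of g with eigenvalue λ and y belongs to the generalized eigenspace of g with eigenvalue μ, then B(x, y) = 0. -/
/-! Write `g x = λ x + x'` and `g y = μ y + y'` with `x' = (g - λ) x` and `y' = (g - μ) y`.
Expanding `B (g x) (g y) = B x y` gives `(1 - λ μ) B x y = λ B x y' + μ B x' y + B x' y'`, and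
`x'`, `y'` are killed by smaller powers of `g - λ`, `g - μ` than `x`, `y`; so induction on these
exponents shows that `B x y = 0`. -/

namespace Module.End

variable {K V : Type*} [Field K] [AddCommGroup V] [Module K V]
  {B : V →ₗ[K] V →ₗ[K] K} {f : Module.End K V}

theorem one_sub_mul_mul_apply_eq_of_apply_apply_eq
    (hf : ∀ x y, B (f x) (f y) = B x y) (lam mu : K) (x y : V) :
    (1 - lam * mu) * B x y = lam * B x ((f - mu • 1) y) + mu * B ((f - lam • 1) x) y +
      B ((f - lam • 1) x) ((f - mu • 1) y) := by
  have hxy := hf x y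
  simp only [LinearMap.sub_apply, LinearMap.smul_apply, one_apply, map_sub, map_smul,
    smul_eq_mul] at hxy ⊢
  linear_combination -hxy

theorem apply_eq_zero_of_pow_sub_smul_apply_eq_zero
    (hf : ∀ x y, B (f x) (f y) = B x y) {lam mu : K} (hlm : lam * mu ≠ 1) (k l : ℕ) {x y : V}
    (hx : ((f - lam • 1) ^ k) x = 0) (hy : ((f - mu • 1) ^ l) y = 0) : B x y = 0 := by
  induction k generalizing x l y with
  | zero => simp_all
  | succ k ihk =>
    induction l generalizing y with
    | zero => simp_all
    | succ l ihl =>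
      rw [pow_succ, mul_apply] at hx hy
      have h := one_sub_mul_mul_apply_eq_of_apply_apply_eq hf lam mu x y
      rw [ihl hy, ihk (l + 1) hx (by rwa [pow_succ, mul_apply]), ihk l hx hy] at h
      rw [mul_zero, mul_zero, add_zero, add_zero, mul_eq_zero] at h
      exact h.resolve_left (sub_ne_zero.mpr hlm.symm)

end Module.End

theorem maxGenEigenspace_orthogonal_of_mul_ne_one_general
    (V : Type*) [AddCommGroup V] [Module ℂ V]
    (B : V →ₗ[ℂ] V →ₗ[ℂ] ℂ)
    (g : V ≃ₗ[ℂ] V) (hBg : ∀ x y : V, B (g x) (g y) = B x y)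
    (lam mu : ℂ) (hlm : lam * mu ≠ 1) (x y : V)
    (hx : x ∈ Module.End.maxGenEigenspace g.toLinearMap lam)
    (hy : y ∈ Module.End.maxGenEigenspace g.toLinearMap mu) :
    B x y = 0 := by
  obtain ⟨k, hk⟩ := (Module.End.mem_maxGenEigenspace _ _ _).mp hx
  obtain ⟨l, hl⟩ := (Module.End.mem_maxGenEigenspace _ _ _).mp hy
  exact Module.End.apply_eq_zero_of_pow_sub_smul_apply_eq_zero hBg hlm k l hk hl

/-- If a linear automorphism `g` of a finite-dimensional complex vector space preserves a
symmetric bilinear form `B`, and `λ * μ ≠ 1`, then the generalized eigenspaces of `g` with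
eigenvalues `λ` and `μ` are orthogonal with respect to `B`. -/
theorem maxGenEigenspace_orthogonal_of_mul_ne_one
    (V : Type*) [AddCommGroup V] [Module ℂ V] [FiniteDimensional ℂ V]
    (B : V →ₗ[ℂ] V →ₗ[ℂ] ℂ) (hBsymm : ∀ x y : V, B x y = B y x)
    (g : V ≃ₗ[ℂ] V) (hBg : ∀ x y : V, B (g x) (g y) = B x y)
    (lam mu : ℂ) (hlm : lam * mu ≠ 1) (x y : V)
    (hx : x ∈ Module.End.maxGenEigenspace g.toLinearMap lam)
    (hy : y ∈ Module.End.maxGenEigenspace g.toLinearMap mu) :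
    B x y = 0 :=
  maxGenEigenspace_orthogonal_of_mul_ne_one_general V B g hBg lam mu hlm x y hx hy
end

section
/- Let V be a finite-dimensional vector space over ℂ, B a nondegenerate symmetric bilinear form on V, and g : V ≃ V a linear automorphism preserving B, i.e. B(g x, g y) = B(x, y) for all x, y ∈ V. Let λ ∈ ℂ with λ ≠ 0. Then the pairing of B between the generalized eigenspace of g with eigenvalue λ and the generalized eigenspace of g with eigenvalue λ⁻¹ is nondegenerate: for every nonzero x in the generalized eigenspace with eigenvalue λ there exists y in the generalized eigenspace with eigenvalue λ⁻¹ such that B(x, y) ≠ 0. -/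
/-!
If `g` preserves `B`, then for `u' = (g - a) u` and `v' = (g - b) v` one has
`(1 - a b) B(u, v) = B(u', v') + b B(u', v) + a B(u, v')`. Induction on the nilpotency orders
shows that the generalized eigenspaces for `a` and `b` are `B`-orthogonal whenever `a b ≠ 1`.
Hence a vector `x` of the `λ`-generalized eigenspace that is orthogonal to the
`λ⁻¹`-generalized eigenspace is orthogonal to all generalized eigenspaces; over `ℂ` these span
`V`, so nondegeneracy forces `x = 0`.
-/

namespace LinearMap

open Module End

variable {K M : Type*} [Field K] [AddCommGroup M] [Module K M]
  {B : M →ₗ[K] M →ₗ[K] K} {f : End K M}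

theorem one_sub_mul_mul_apply_eq_of_isometry (hf : ∀ x y, B (f x) (f y) = B x y)
    (a b : K) (u v : M) :
    (1 - a * b) * B u v = B ((f - a • 1) u) ((f - b • 1) v) + b * B ((f - a • 1) u) v
      + a * B u ((f - b • 1) v) := by
  have hfuv := hf u v
  simp only [sub_apply, smul_apply, one_apply, map_sub, map_smul,
    smul_eq_mul] at hfuv ⊢
  linear_combination -hfuv

theorem apply_eq_zero_of_mem_genEigenspace_of_isometry (hf : ∀ x y, B (f x) (f y) = B x y)
    {a b : K} (hab : a * b ≠ 1) (m n : ℕ) {u v : M} (hu : u ∈ f.genEigenspace a m)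
    (hv : v ∈ f.genEigenspace b n) : B u v = 0 := by
  induction m generalizing u n v with
  | zero => simp_all [mem_genEigenspace_nat]
  | succ m ihm =>
    induction n generalizing v with
    | zero => simp_all [mem_genEigenspace_nat]
    | succ n ihn =>
      simp only [mem_genEigenspace_nat, mem_ker, pow_succ, mul_apply] at hu hv ihm ihn
      have h := one_sub_mul_mul_apply_eq_of_isometry hf a b u v
      rw [ihm n hu hv, ihm (n + 1) (v := v) hu (by rwa [pow_succ, mul_apply]), ihn hv] at h
      exact (mul_eq_zero.mp (by simpa using h)).resolve_left (sub_ne_zero.mpr hab.symm)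

theorem apply_eq_zero_of_mem_maxGenEigenspace_of_isometry (hf : ∀ x y, B (f x) (f y) = B x y)
    {a b : K} (hab : a * b ≠ 1) {u v : M} (hu : u ∈ f.maxGenEigenspace a)
    (hv : v ∈ f.maxGenEigenspace b) : B u v = 0 := by
  obtain ⟨m, hu⟩ := (mem_maxGenEigenspace f a u).mp hu
  obtain ⟨n, hv⟩ := (mem_maxGenEigenspace f b v).mp hv
  exact apply_eq_zero_of_mem_genEigenspace_of_isometry hf hab m n
    (mem_genEigenspace_nat.mpr hu) (mem_genEigenspace_nat.mpr hv)

end LinearMap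

theorem LinearMap.eq_zero_of_maxGenEigenspace_le_ker {K M N : Type*} [Field K] [IsAlgClosed K]
    [AddCommGroup M] [Module K M] [FiniteDimensional K M] [AddCommGroup N] [Module K N]
    (f : Module.End K M) (φ : M →ₗ[K] N) (h : ∀ μ, f.maxGenEigenspace μ ≤ ker φ) : φ = 0 := by
  rw [← ker_eq_top, eq_top_iff, ← Module.End.iSup_maxGenEigenspace_eq_top f]
  exact iSup_le h

theorem maxGenEigenspace_pairing_nondegenerate_general
    (V : Type*) [AddCommGroup V] [Module ℂ V] [FiniteDimensional ℂ V]
    (B : V →ₗ[ℂ] V →ₗ[ℂ] ℂ)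
    (hBnondeg : ∀ x : V, (∀ y : V, B x y = 0) → x = 0)
    (g : V ≃ₗ[ℂ] V) (hBg : ∀ x y : V, B (g x) (g y) = B x y)
    (lam : ℂ) (x : V)
    (hx : x ∈ Module.End.maxGenEigenspace g.toLinearMap lam) (hx0 : x ≠ 0) :
    ∃ y ∈ Module.End.maxGenEigenspace g.toLinearMap lam⁻¹, B x y ≠ 0 := by
  by_contra! hperp
  refine hx0 (hBnondeg x fun y => ?_)
  suffices B x = 0 by simp [this]
  refine LinearMap.eq_zero_of_maxGenEigenspace_le_ker g.toLinearMap (B x) fun μ z hz => ?_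
  by_cases hμ : lam * μ = 1
  · rw [eq_inv_of_mul_eq_one_right hμ] at hz
    exact hperp z hz
  · exact LinearMap.apply_eq_zero_of_mem_maxGenEigenspace_of_isometry hBg hμ hx hz

/-- If a linear automorphism `g` of a finite-dimensional complex vector space preserves a
nondegenerate symmetric bilinear form `B`, then for `λ ≠ 0` the pairing of `B` between the
generalized eigenspace of `g` with eigenvalue `λ` and the one with eigenvalue `λ⁻¹` is
nondegenerate. -/
theorem maxGenEigenspace_pairing_nondegenerate
    (V : Type*) [AddCommGroup V] [Module ℂ V] [FiniteDimensional ℂ V]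
    (B : V →ₗ[ℂ] V →ₗ[ℂ] ℂ) (hBsymm : ∀ x y : V, B x y = B y x)
    (hBnondeg : ∀ x : V, (∀ y : V, B x y = 0) → x = 0)
    (g : V ≃ₗ[ℂ] V) (hBg : ∀ x y : V, B (g x) (g y) = B x y)
    (lam : ℂ) (hlam : lam ≠ 0) (x : V)
    (hx : x ∈ Module.End.maxGenEigenspace g.toLinearMap lam) (hx0 : x ≠ 0) :
    ∃ y ∈ Module.End.maxGenEigenspace g.toLinearMap lam⁻¹, B x y ≠ 0 :=
  maxGenEigenspace_pairing_nondegenerate_general V B hBnondeg g hBg lam x hx hx0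
end

section
/- Let V be a vector space over ℂ, B a bilinear form on V, and N : V → V a nilpotent ℂ-linear map such that the exponential exp N = ∑_{k≥0} N^k / k! (a finite sum, since N is nilpotent) preserves B, i.e. B((exp N) x, (exp N) y) = B(x, y) for all x, y ∈ V. Then B(N x, y) + B(x, N y) = 0 for all x, y ∈ V. -/
/-!
Let `L B = B (N ·) ·` and `R B = B · (N ·)`; these are commuting nilpotent endomorphisms of the
space of bilinear forms, and the hypothesis says that `exp (L + R) = exp L * exp R` fixes `B`.
For nilpotent `D` one has `exp D - 1 = u * D` with `u = ∑ Dⁱ / (i + 1)!` a unit, so a vector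
fixed by `exp D` is killed by `D`; for `D = L + R` this is the claim.
-/

open Finset

namespace IsNilpotent

variable {A : Type*} [Ring A] [Module ℚ A]

theorem exists_isUnit_exp_sub_one_eq_mul {a : A} (ha : IsNilpotent a) :
    ∃ u : A, IsUnit u ∧ exp a - 1 = u * a := by
  obtain ⟨k, hk⟩ := ha
  refine ⟨∑ i ∈ range (k + 1), ((i + 1).factorial : ℚ)⁻¹ • a ^ i, ?_, ?_⟩
  · rw [sum_range_succ']
    simp only [zero_add, Nat.factorial_one, Nat.cast_one, inv_one, pow_zero, one_smul]
    refine isUnit_add_one (Commute.isNilpotent_sum (fun i _ => ?_) fun i j _ _ => ?_)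
    · exact (pow_of_pos ⟨k, hk⟩ i.succ_ne_zero).smul _
    · exact ((Commute.pow_pow_self a _ _).smul_left (_ : ℚ)).smul_right (_ : ℚ)
  · rw [exp_eq_sum (pow_eq_zero_of_le (by omega : k ≤ k + 1 + 1) hk), sum_range_succ', sum_mul]
    simp only [Nat.factorial_zero, Nat.cast_one, inv_one, pow_zero, one_smul, add_sub_cancel_right,
      smul_mul_assoc]
    exact sum_congr rfl fun i _ => by rw [_root_.pow_succ]

theorem smul_eq_zero_of_exp_smul_eq_self {M : Type*} [AddCommGroup M] [Module A M] {a : A}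
    (ha : IsNilpotent a) {m : M} (h : exp a • m = m) : a • m = 0 := by
  obtain ⟨u, hu, hexp⟩ := ha.exists_isUnit_exp_sub_one_eq_mul
  rw [← hu.smul_eq_zero, ← mul_smul, ← hexp, sub_smul, one_smul, h, sub_self]

end IsNilpotent

namespace LinearMap.BilinMap

section CommSemiring

variable {R V M : Type*} [CommSemiring R] [AddCommMonoid V] [Module R V] [AddCommMonoid M]
  [Module R M]

def compLeftₗ (f : Module.End R V) : Module.End R (LinearMap.BilinMap R V M) :=
  lcomp R (V →ₗ[R] M) f

def compRightₗ (f : Module.End R V) : Module.End R (LinearMap.BilinMap R V M) :=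
  llcomp R V (V →ₗ[R] M) (V →ₗ[R] M) (lcomp R M f)

@[simp]
theorem compLeftₗ_apply (f : Module.End R V) (B : LinearMap.BilinMap R V M) (x y : V) :
    compLeftₗ f B x y = B (f x) y :=
  rfl

@[simp]
theorem compRightₗ_apply (f : Module.End R V) (B : LinearMap.BilinMap R V M) (x y : V) :
    compRightₗ f B x y = B x (f y) :=
  rfl

theorem compLeftₗ_pow (f : Module.End R V) (n : ℕ) :
    (compLeftₗ f : Module.End R (LinearMap.BilinMap R V M)) ^ n = compLeftₗ (f ^ n) := by
  induction n with
  | zero => rfl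
  | succ n ih => rw [pow_succ', ih, pow_succ]; rfl

theorem compRightₗ_pow (f : Module.End R V) (n : ℕ) :
    (compRightₗ f : Module.End R (LinearMap.BilinMap R V M)) ^ n = compRightₗ (f ^ n) := by
  induction n with
  | zero => rfl
  | succ n ih => rw [pow_succ', ih, pow_succ]; rfl

theorem commute_compLeftₗ_compRightₗ (f g : Module.End R V) :
    Commute (compLeftₗ f : Module.End R (LinearMap.BilinMap R V M)) (compRightₗ g) :=
  rfl

@[simp]
theorem compLeftₗ_zero : (compLeftₗ 0 : Module.End R (LinearMap.BilinMap R V M)) = 0 := by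
  ext; simp

@[simp]
theorem compRightₗ_zero : (compRightₗ 0 : Module.End R (LinearMap.BilinMap R V M)) = 0 := by
  ext; simp

theorem isNilpotent_compLeftₗ {f : Module.End R V} (hf : IsNilpotent f) :
    IsNilpotent (compLeftₗ f : Module.End R (LinearMap.BilinMap R V M)) := by
  obtain ⟨k, hk⟩ := hf
  exact ⟨k, by rw [compLeftₗ_pow, hk, compLeftₗ_zero]⟩

theorem isNilpotent_compRightₗ {f : Module.End R V} (hf : IsNilpotent f) :
    IsNilpotent (compRightₗ f : Module.End R (LinearMap.BilinMap R V M)) := by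
  obtain ⟨k, hk⟩ := hf
  exact ⟨k, by rw [compRightₗ_pow, hk, compRightₗ_zero]⟩

end CommSemiring

section Field

variable {K V M : Type*} [Field K] [CharZero K] [AddCommGroup V] [Module K V] [AddCommGroup M]
  [Module K M] [Module ℚ M]

theorem exp_compLeftₗ {f : Module.End K V} {k : ℕ} (hf : f ^ k = 0)
    (B : LinearMap.BilinMap K V M) :
    IsNilpotent.exp (compLeftₗ f) B =
      compLeftₗ (∑ i ∈ Finset.range k, (i.factorial : K)⁻¹ • f ^ i) B := by
  rw [IsNilpotent.exp_eq_sum (k := k) (by rw [compLeftₗ_pow, hf, compLeftₗ_zero])]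
  ext x y
  simp [compLeftₗ_pow, ← Rat.cast_smul_eq_qsmul K]

theorem exp_compRightₗ {f : Module.End K V} {k : ℕ} (hf : f ^ k = 0)
    (B : LinearMap.BilinMap K V M) :
    IsNilpotent.exp (compRightₗ f) B =
      compRightₗ (∑ i ∈ Finset.range k, (i.factorial : K)⁻¹ • f ^ i) B := by
  rw [IsNilpotent.exp_eq_sum (k := k) (by rw [compRightₗ_pow, hf, compRightₗ_zero])]
  ext x y
  simp [compRightₗ_pow, ← Rat.cast_smul_eq_qsmul K]

end Field

end LinearMap.BilinMap

open LinearMap.BilinMap in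
/-- If `N` is a nilpotent linear endomorphism of a complex vector space `V` whose exponential
`exp N = ∑_{i < k} N^i / i!` (a finite sum, `N ^ k = 0`) preserves a bilinear form `B`, then
`B(N x, y) + B(x, N y) = 0` for all `x, y`. -/
theorem nilpotent_exp_invariance_skew
    (V : Type*) [AddCommGroup V] [Module ℂ V]
    (B : V →ₗ[ℂ] V →ₗ[ℂ] ℂ) (N : Module.End ℂ V)
    (k : ℕ) (hk : N ^ k = 0)
    (hexp : ∀ x y : V,
      B ((∑ i ∈ Finset.range k, ((i.factorial : ℂ)⁻¹) • N ^ i) x)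
        ((∑ i ∈ Finset.range k, ((i.factorial : ℂ)⁻¹) • N ^ i) y) = B x y)
    (x y : V) : B (N x) y + B x (N y) = 0 := by
  have hL := isNilpotent_compLeftₗ (M := ℂ) ⟨k, hk⟩
  have hR := isNilpotent_compRightₗ (M := ℂ) ⟨k, hk⟩
  have hfix : IsNilpotent.exp (compLeftₗ N + compRightₗ N :
      Module.End ℂ (LinearMap.BilinMap ℂ V ℂ)) • B = B := by
    rw [IsNilpotent.exp_add_of_commute (commute_compLeftₗ_compRightₗ N N) hL hR,
      Module.End.smul_def, Module.End.mul_apply, exp_compRightₗ hk, exp_compLeftₗ hk]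
    ext u v
    exact hexp u v
  have := (commute_compLeftₗ_compRightₗ N N).isNilpotent_add hL hR
    |>.smul_eq_zero_of_exp_smul_eq_self hfix
  simpa using LinearMap.congr_fun₂ this x y
end
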